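/- There exists an absolute constant C > 0 such that the following holds. Let X be a zero-mean random vector in R^d with covariance matrix Σ satisfying the L4-L2 moment equivalence with constant κ, let p ∈ (0,1], β > 0, v ∈ S^{d−1}, and let Y = X ⊙ p. Then E Σ_{i≠j≠l} ⟨Y,e_i⟩² ⟨Y,e_j⟩ ⟨Y,e_l⟩ β^{−1} v_j v_l ≤ C p³ κ⁴ ( ‖Σ‖² + β^{−2} tr(Σ)² + β^{−1} ‖Σ‖ tr(Σ) ), where the sum is over triples of pairwise distinct indices i, j, l ∈ {1,...,d} with j ≠ l, and ‖·‖ is the operator norm. -/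

import Mathlib

open MeasureTheory ProbabilityTheory Real
open scoped ENNReal NNReal

noncomputable section

/-- The diagonal part of a matrix: off-diagonal entries set to zero. -/
def diagPart {d : ℕ} (M : Matrix (Fin d) (Fin d) ℝ) : Matrix (Fin d) (Fin d) ℝ :=
  Matrix.of fun i j => if i = j then M i j else 0

/-- The off-diagonal part of a matrix. -/
def offPart {d : ℕ} (M : Matrix (Fin d) (Fin d) ℝ) : Matrix (Fin d) (Fin d) ℝ :=
  M - diagPart M

/-- Outer product `x xᵀ`. -/
def outer {d : ℕ} (x : Fin d → ℝ) : Matrix (Fin d) (Fin d) ℝ :=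
  Matrix.of fun i j => x i * x j

/-- Bilinear form `uᵀ M w`. -/
def bilinForm {d : ℕ} (M : Matrix (Fin d) (Fin d) ℝ) (u w : Fin d → ℝ) : ℝ :=
  ∑ i, ∑ j, u i * M i j * w j

/-- Quadratic form `vᵀ M v`. -/
def quadForm {d : ℕ} (M : Matrix (Fin d) (Fin d) ℝ) (v : Fin d → ℝ) : ℝ :=
  bilinForm M v v

/-- Operator (spectral) norm of a matrix acting on Euclidean space. -/
def opNorm {d : ℕ} (M : Matrix (Fin d) (Fin d) ℝ) : ℝ :=
  ‖LinearMap.toContinuousLinearMap (Matrix.toEuclideanLin M)‖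

/-- Effective rank `tr Σ / ‖Σ‖`. -/
def effRank {d : ℕ} (S : Matrix (Fin d) (Fin d) ℝ) : ℝ :=
  S.trace / opNorm S

/-- The unit sphere `S^{d-1}` in `ℝ^d`. -/
def unitSphere (d : ℕ) : Set (Fin d → ℝ) := {v | ∑ i, (v i) ^ 2 = 1}

/-- The truncation function: `ψ(x) = x` on `[-1,1]` and `ψ(x) = sign x` for `|x| > 1`. -/
def psi (x : ℝ) : ℝ := max (-1) (min 1 x)

variable {Ω : Type*} [MeasureSpace Ω]

/-- `X` has zero mean (coordinatewise integrable with zero integral). -/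
def ZeroMean {d : ℕ} (X : Ω → Fin d → ℝ) : Prop :=
  ∀ i, Integrable (fun ω => X ω i) ∧ ∫ ω, X ω i = 0

/-- `S` is the covariance matrix of the (zero-mean) random vector `X`. -/
def IsCov {d : ℕ} (X : Ω → Fin d → ℝ) (S : Matrix (Fin d) (Fin d) ℝ) : Prop :=
  ∀ i j, S i j = ∫ ω, X ω i * X ω j

/-- All fourth moments of the coordinates of `X` are finite. -/
def FiniteFourthMoments {d : ℕ} (X : Ω → Fin d → ℝ) : Prop :=
  ∀ i j k l : Fin d, Integrable (fun ω => X ω i * X ω j * X ω k * X ω l)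

/-- The `L₄-L₂` moment equivalence (hypercontractivity) with constant `κ`:
for every unit vector `v`, `(E|⟨X,v⟩|⁴)^{1/4} ≤ κ (E|⟨X,v⟩|²)^{1/2}`. -/
def L4L2 {d : ℕ} (X : Ω → Fin d → ℝ) (κ : ℝ) : Prop :=
  ∀ v ∈ unitSphere d,
    (∫ ω, |∑ i, X ω i * v i| ^ 4) ^ ((1 : ℝ)/4) ≤
      κ * (∫ ω, |∑ i, X ω i * v i| ^ 2) ^ ((1 : ℝ)/2)

/-- `ε : Ω → Fin d → ℝ` is a vector of i.i.d. Bernoulli(p) {0,1}-valued random variables. -/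
def IsBernoulliMask {d : ℕ} (p : ℝ) (ε : Ω → Fin d → ℝ) : Prop :=
  (∀ ω i, ε ω i = 0 ∨ ε ω i = 1) ∧
  (∀ i, Measurable fun ω => ε ω i) ∧
  (∀ i, (ℙ : Measure Ω) {ω | ε ω i = 1} = ENNReal.ofReal p) ∧
  iIndepFun (fun i ω => ε ω i) ℙ

/-- `Y = X ⊙ p`: the `p`-sparsification of `X` by the Bernoulli mask `ε`,
with `ε` independent of `X`. -/
def IsSparsified {d : ℕ} (p : ℝ) (X ε Y : Ω → Fin d → ℝ) : Prop :=
  IsBernoulliMask p ε ∧ Measurable X ∧ IndepFun X ε ∧ ∀ ω i, Y ω i = X ω i * ε ω i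

/-- `Y 0, ..., Y (N-1)` are i.i.d. copies of the `p`-sparsification of `X`. -/
def IsIIDSparsifiedSample {d N : ℕ} (p : ℝ) (X : Ω → Fin d → ℝ)
    (Y : Fin N → Ω → Fin d → ℝ) : Prop :=
  (∀ j, Measurable (Y j)) ∧
  iIndepFun Y ℙ ∧
  ∃ ε Y₀, Measurable Y₀ ∧ IsSparsified p X ε Y₀ ∧
    ∀ j, Measure.map (Y j) ℙ = Measure.map Y₀ ℙ

/-- `θ` is a Gaussian vector with mean `m` and covariance `σ2 • I` (independent
Gaussian coordinates). -/
def IsGaussianVecIndep {d : ℕ} (m : Fin d → ℝ) (σ2 : ℝ≥0) (θ : Ω → Fin d → ℝ) : Prop :=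
  (∀ i, Measurable fun ω => θ ω i) ∧
  (∀ i, Measure.map (fun ω => θ ω i) ℙ = gaussianReal (m i) σ2) ∧
  iIndepFun (fun i ω => θ ω i) ℙ

/-- `G` is a centered Gaussian vector with covariance matrix `S`: every linear marginal
`⟨G, v⟩` is a real Gaussian with mean `0` and variance `vᵀ S v`. -/
def IsCenteredGaussianVector {d : ℕ} (S : Matrix (Fin d) (Fin d) ℝ) (G : Ω → Fin d → ℝ) : Prop :=
  Measurable G ∧
  ∀ v : Fin d → ℝ, Measure.map (fun ω => ∑ i, G ω i * v i) ℙ =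
    gaussianReal 0 (quadForm S v).toNNReal

end

/-!
Since the mask is independent of `X` and `ε_i ε_j ε_l` has mean `p³` for distinct indices, the
left side equals `p³ β⁻¹ ∑_{i,j,l distinct} E[X_i² X_j X_l] v_j v_l`. Summed over all triples
this is `E[‖X‖² ⟨X,v⟩²]`, which Cauchy–Schwarz and the `L₄-L₂` equivalence bound by
`κ⁴ tr Σ ‖Σ‖`. The same two tools give `|E[X_i² X_j X_l]| ≤ κ⁴ Σ_ii √Σ_jj √Σ_ll`, so each of the
three sums over triples with two equal indices is at most `κ⁴ ‖Σ‖ tr Σ` as well. Hence the left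
side is at most `4 p³ β⁻¹ κ⁴ ‖Σ‖ tr Σ`, one of the terms on the right with `C = 4`.
-/

open Finset

lemma le_pow_four_mul_sq_of_rpow_le {a b κ : ℝ} (ha : 0 ≤ a) (hb : 0 ≤ b)
    (h : a ^ (1 / 4 : ℝ) ≤ κ * b ^ (1 / 2 : ℝ)) : a ≤ κ ^ 4 * b ^ 2 := by
  have h4 := pow_le_pow_left₀ (rpow_nonneg ha _) h 4
  rwa [← rpow_natCast, ← rpow_mul ha, mul_pow, ← rpow_natCast (b ^ _), ← rpow_mul hb,
    show (1 / 4 : ℝ) * (4 : ℕ) = 1 by norm_num, show (1 / 2 : ℝ) * (4 : ℕ) = 2 by norm_num,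
    rpow_one, rpow_two] at h4

lemma abs_integral_mul_le_sqrt_mul_sqrt {α : Type*} [MeasurableSpace α] {μ : Measure α}
    {f g : α → ℝ} (hf : MemLp f 2 μ) (hg : MemLp g 2 μ) :
    |∫ a, f a * g a ∂μ| ≤ √(∫ a, f a ^ 2 ∂μ) * √(∫ a, g a ^ 2 ∂μ) := by
  have key := integral_mul_norm_le_Lp_mul_Lq (μ := μ) Real.HolderConjugate.two_two
    (f := f) (g := g) (by simpa using hf) (by simpa using hg)
  simp only [norm_eq_abs, rpow_two, sq_abs, ← sqrt_eq_rpow] at key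
  calc |∫ a, f a * g a ∂μ| ≤ ∫ a, |f a * g a| ∂μ := abs_integral_le_integral_abs
    _ = ∫ a, |f a| * |g a| ∂μ := by simp_rw [abs_mul]
    _ ≤ _ := key

instance instHolderTripleFourFourTwo : ENNReal.HolderTriple 4 4 2 :=
  ⟨by rw [← two_mul, show (4 : ℝ≥0∞) = 2 * 2 by norm_num, ENNReal.mul_inv (by simp) (by simp),
    ← mul_assoc, ENNReal.mul_inv_cancel (by simp) (by simp), one_mul]⟩

section Matrix

variable {d : ℕ}

lemma quadForm_le_opNorm (M : Matrix (Fin d) (Fin d) ℝ) {v : Fin d → ℝ}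
    (hv : v ∈ unitSphere d) : quadForm M v ≤ opNorm M := by
  set T := LinearMap.toContinuousLinearMap (Matrix.toEuclideanLin M)
  set x : EuclideanSpace ℝ (Fin d) := WithLp.toLp 2 v
  have hx : ‖x‖ = 1 := by
    simp only [x, EuclideanSpace.norm_eq, norm_eq_abs, sq_abs]
    rw [hv.out, sqrt_one]
  have hq : quadForm M v = inner ℝ x (T x) := by
    simp only [quadForm, bilinForm, T, x, LinearMap.coe_toContinuousLinearMap',
      Matrix.toLpLin_apply, EuclideanSpace.inner_eq_star_dotProduct, dotProduct, Matrix.mulVec,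
      star_trivial]
    simp only [sum_mul]
    exact sum_congr rfl fun i _ => sum_congr rfl fun j _ => by ring
  calc quadForm M v = inner ℝ x (T x) := hq
    _ ≤ ‖x‖ * ‖T x‖ := real_inner_le_norm _ _
    _ ≤ ‖x‖ * (‖T‖ * ‖x‖) := by gcongr; exact T.le_opNorm x
    _ = opNorm M := by rw [hx, one_mul, mul_one]; rfl

lemma single_mem_unitSphere (i : Fin d) : Pi.single i (1 : ℝ) ∈ unitSphere d := by
  simp [unitSphere, Pi.single_apply]

lemma quadForm_single (M : Matrix (Fin d) (Fin d) ℝ) (i : Fin d) :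
    quadForm M (Pi.single i 1) = M i i := by
  simp [quadForm, bilinForm, Pi.single_apply]

lemma diag_le_opNorm (M : Matrix (Fin d) (Fin d) ℝ) (i : Fin d) : M i i ≤ opNorm M :=
  quadForm_single M i ▸ quadForm_le_opNorm M (single_mem_unitSphere i)

end Matrix

lemma ite_pairwise_ne_le {ι : Type*} [DecidableEq ι] (i j l : ι) (x : ℝ) :
    (if i ≠ j ∧ j ≠ l ∧ i ≠ l then x else 0) ≤
      x + ((if i = j then |x| else 0) + (if j = l then |x| else 0) +
        (if i = l then |x| else 0)) := by
  have := neg_abs_le x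
  have := abs_nonneg x
  split_ifs <;> first | linarith | tauto

lemma sum_ite_pairwise_ne_le {ι : Type*} [Fintype ι] [DecidableEq ι] (a : ι → ι → ι → ℝ) :
    ∑ i, ∑ j, ∑ l, (if i ≠ j ∧ j ≠ l ∧ i ≠ l then a i j l else 0) ≤
      ∑ i, ∑ j, ∑ l, a i j l +
        (∑ i, ∑ l, |a i i l| + ∑ i, ∑ j, |a i j j| + ∑ i, ∑ j, |a i j i|) := by
  calc _ ≤ ∑ i, ∑ j, ∑ l, (a i j l + ((if i = j then |a i j l| else 0) +
          (if j = l then |a i j l| else 0) + (if i = l then |a i j l| else 0))) := by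
        gcongr with i _ j _ l _
        exact ite_pairwise_ne_le i j l _
    _ = _ := by
        simp only [sum_add_distrib, sum_ite_irrel, sum_const_zero, sum_ite_eq, mem_univ,
          if_true]

lemma sum_abs_partial_diag_le {ι : Type*} [Fintype ι] {a : ι → ι → ι → ℝ} {s v : ι → ℝ}
    {K N : ℝ}
    (hK : 0 ≤ K) (hN : 0 ≤ N) (hs : ∀ i, 0 ≤ s i) (hsN : ∀ i, s i ≤ N)
    (hv : ∑ i, v i ^ 2 = 1)
    (ha : ∀ i j l, |a i j l| ≤ K * (s i * (√(s j) * |v j|) * (√(s l) * |v l|))) :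
    ∑ i, ∑ l, |a i i l| + ∑ i, ∑ j, |a i j j| + ∑ i, ∑ j, |a i j i| ≤
      3 * (K * (N * ∑ i, s i)) := by
  set w : ι → ℝ := fun j => √(s j) * |v j|
  have hw : ∀ j, 0 ≤ w j := fun j => by positivity
  have hw2 : ∀ j, w j * w j = s j * v j ^ 2 := fun j => by
    rw [mul_mul_mul_comm, mul_self_sqrt (hs j), abs_mul_abs_self, sq]
  have hsum_w : (∑ j, w j) ^ 2 ≤ ∑ j, s j := by
    have := sum_mul_sq_le_sq_mul_sq univ (fun j => √(s j)) (fun j => |v j|)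
    simpa only [sq_abs, sq_sqrt (hs _), hv, mul_one] using this
  have h_ii : ∑ i, ∑ l, s i * w i * w l ≤ N * ∑ i, s i := by
    calc ∑ i, ∑ l, s i * w i * w l = (∑ i, s i * w i) * ∑ l, w l := by
          rw [sum_mul_sum]
      _ ≤ (∑ i, N * w i) * ∑ l, w l :=
          mul_le_mul_of_nonneg_right
            (sum_le_sum fun i _ => mul_le_mul_of_nonneg_right (hsN i) (hw i))
            (sum_nonneg fun l _ => hw l)
      _ = N * (∑ l, w l) ^ 2 := by rw [← mul_sum]; ring
      _ ≤ N * ∑ i, s i := by gcongr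
  have h_jj : ∑ i, ∑ j, s i * w j * w j ≤ N * ∑ i, s i := by
    calc ∑ i, ∑ j, s i * w j * w j = (∑ i, s i) * ∑ j, s j * v j ^ 2 := by
          simp only [mul_assoc, hw2, sum_mul_sum]
      _ ≤ (∑ i, s i) * ∑ j, N * v j ^ 2 :=
          mul_le_mul_of_nonneg_left
            (sum_le_sum fun j _ => mul_le_mul_of_nonneg_right (hsN j) (sq_nonneg _))
            (sum_nonneg fun i _ => hs i)
      _ = N * ∑ i, s i := by rw [← mul_sum, hv]; ring
  have h1 : ∑ i, ∑ l, |a i i l| ≤ K * (N * ∑ i, s i) :=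
    calc ∑ i, ∑ l, |a i i l| ≤ ∑ i, ∑ l, K * (s i * w i * w l) := by
          gcongr with i _ l _; exact ha i i l
      _ = K * ∑ i, ∑ l, s i * w i * w l := by simp only [mul_sum]
      _ ≤ K * (N * ∑ i, s i) := mul_le_mul_of_nonneg_left h_ii hK
  have h2 : ∑ i, ∑ j, |a i j j| ≤ K * (N * ∑ i, s i) :=
    calc ∑ i, ∑ j, |a i j j| ≤ ∑ i, ∑ j, K * (s i * w j * w j) := by
          gcongr with i _ j _; exact ha i j j
      _ = K * ∑ i, ∑ j, s i * w j * w j := by simp only [mul_sum]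
      _ ≤ K * (N * ∑ i, s i) := mul_le_mul_of_nonneg_left h_jj hK
  have h3 : ∑ i, ∑ j, |a i j i| ≤ K * (N * ∑ i, s i) :=
    calc ∑ i, ∑ j, |a i j i| ≤ ∑ i, ∑ j, K * (s i * w i * w j) := by
          gcongr with i _ j _; exact (ha i j i).trans_eq (by ring)
      _ = K * ∑ i, ∑ l, s i * w i * w l := by simp only [mul_sum]
      _ ≤ K * (N * ∑ i, s i) := mul_le_mul_of_nonneg_left h_ii hK
  linarith

section Moments

variable {Ω : Type*} [MeasureSpace Ω] {d : ℕ} {X : Ω → Fin d → ℝ}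

lemma FiniteFourthMoments.memLp_four (h : FiniteFourthMoments X) (hX : Measurable X)
    (i : Fin d) : MemLp (fun ω => X ω i) 4 ℙ := by
  rw [← integrable_norm_rpow_iff (f := fun ω => X ω i)
    ((measurable_pi_apply i).comp hX).aestronglyMeasurable (by norm_num) (by norm_num)]
  refine (h i i i i).congr (ae_of_all _ fun ω => ?_)
  simp only [norm_eq_abs, ENNReal.toReal_ofNat]
  rw [show (4 : ℝ) = (4 : ℕ) by norm_num, rpow_natCast, (by decide : Even 4).pow_abs]
  ring

lemma memLp_sum_mul {μ : Measure Ω} {p : ℝ≥0∞} (hX : ∀ i, MemLp (fun ω => X ω i) p μ)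
    (u : Fin d → ℝ) : MemLp (fun ω => ∑ i, X ω i * u i) p μ :=
  memLp_finsetSum univ fun i _ => (hX i).mul_const (u i)

lemma integrable_mul_of_memLp_four {μ : Measure Ω} [IsFiniteMeasure μ] {f g : Ω → ℝ}
    (hf : MemLp f 4 μ) (hg : MemLp g 4 μ) : Integrable (fun ω => f ω * g ω) μ :=
  (hg.mul' hf : MemLp _ 2 μ).integrable one_le_two

lemma integrable_sq_mul_mul {μ : Measure Ω} (hX : ∀ i, MemLp (fun ω => X ω i) 4 μ)
    (i j l : Fin d) : Integrable (fun ω => X ω i ^ 2 * X ω j * X ω l) μ :=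
  (((hX j).mul' (hX i) : MemLp _ 2 μ).integrable_mul ((hX l).mul' (hX i) : MemLp _ 2 μ)).congr
    (ae_of_all _ fun ω => by simp only [Pi.mul_apply]; ring)

lemma sum_mul_single (x : Fin d → ℝ) (i : Fin d) :
    ∑ j, x j * (Pi.single i 1 : Fin d → ℝ) j = x i := by
  simp [Pi.single_apply]

lemma IsCov.diag_nonneg {S : Matrix (Fin d) (Fin d) ℝ} (hS : IsCov X S) (i : Fin d) :
    0 ≤ S i i :=
  hS i i ▸ integral_nonneg fun ω => mul_self_nonneg (X ω i)

lemma IsCov.integral_sq_eq_quadForm {S : Matrix (Fin d) (Fin d) ℝ} (hS : IsCov X S)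
    (hX : ∀ i j, Integrable (fun ω => X ω i * X ω j)) (u : Fin d → ℝ) :
    ∫ ω, (∑ i, X ω i * u i) ^ 2 = quadForm S u := by
  have hexpand : ∀ ω, (∑ i, X ω i * u i) ^ 2 = ∑ i, ∑ j, X ω i * X ω j * (u i * u j) := by
    intro ω
    rw [sq, sum_mul_sum]
    exact sum_congr rfl fun i _ => sum_congr rfl fun j _ => by ring
  have hint : ∀ i j, Integrable (fun ω => X ω i * X ω j * (u i * u j)) :=
    fun i j => (hX i j).mul_const _
  simp_rw [hexpand]
  rw [integral_finsetSum _ fun i _ => integrable_finsetSum _ fun j _ => hint i j]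
  refine sum_congr rfl fun i _ => ?_
  rw [integral_finsetSum _ fun j _ => hint i j]
  refine sum_congr rfl fun j _ => ?_
  rw [integral_mul_const, ← hS]
  ring

variable {κ : ℝ}

lemma L4L2.integral_pow_four_le (h : L4L2 X κ) {u : Fin d → ℝ} (hu : u ∈ unitSphere d) :
    ∫ ω, (∑ i, X ω i * u i) ^ 4 ≤ κ ^ 4 * (∫ ω, (∑ i, X ω i * u i) ^ 2) ^ 2 := by
  have := le_pow_four_mul_sq_of_rpow_le (integral_nonneg fun ω => by positivity)
    (integral_nonneg fun ω => by positivity) (h u hu)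
  simpa only [(by decide : Even 4).pow_abs, sq_abs] using this

lemma L4L2.sqrt_integral_pow_four_le (h : L4L2 X κ) {u : Fin d → ℝ} (hu : u ∈ unitSphere d) :
    √(∫ ω, (∑ i, X ω i * u i) ^ 4) ≤ κ ^ 2 * ∫ ω, (∑ i, X ω i * u i) ^ 2 := by
  have hnonneg : 0 ≤ κ ^ 2 * ∫ ω, (∑ i, X ω i * u i) ^ 2 :=
    mul_nonneg (sq_nonneg κ) (integral_nonneg fun ω => sq_nonneg _)
  calc √(∫ ω, (∑ i, X ω i * u i) ^ 4)
      ≤ √((κ ^ 2 * ∫ ω, (∑ i, X ω i * u i) ^ 2) ^ 2) := by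
        gcongr; exact (h.integral_pow_four_le hu).trans_eq (by ring)
    _ = κ ^ 2 * ∫ ω, (∑ i, X ω i * u i) ^ 2 := sqrt_sq hnonneg

lemma L4L2.integral_sq_mul_sq_le [IsFiniteMeasure (ℙ : Measure Ω)] {S : Matrix (Fin d) (Fin d) ℝ}
    (h : L4L2 X κ) (hS : IsCov X S) (hX : ∀ i, MemLp (fun ω => X ω i) 4 ℙ)
    {u w : Fin d → ℝ} (hu : u ∈ unitSphere d) (hw : w ∈ unitSphere d) :
    ∫ ω, (∑ i, X ω i * u i) ^ 2 * (∑ i, X ω i * w i) ^ 2 ≤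
      κ ^ 4 * quadForm S u * quadForm S w := by
  have hsq : ∀ u : Fin d → ℝ, MemLp (fun ω => (∑ i, X ω i * u i) ^ 2) 2 ℙ := fun u => by
    simpa only [sq] using ((memLp_sum_mul hX u).mul' (memLp_sum_mul hX u) : MemLp _ 2 ℙ)
  have hq := hS.integral_sq_eq_quadForm fun i j => integrable_mul_of_memLp_four (hX i) (hX j)
  have hbound : ∀ u ∈ unitSphere d, √(∫ ω, ((∑ i, X ω i * u i) ^ 2) ^ 2) ≤
      κ ^ 2 * quadForm S u := fun u hu => by
    simpa only [← pow_mul, hq] using h.sqrt_integral_pow_four_le hu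
  calc ∫ ω, (∑ i, X ω i * u i) ^ 2 * (∑ i, X ω i * w i) ^ 2
      ≤ √(∫ ω, ((∑ i, X ω i * u i) ^ 2) ^ 2) * √(∫ ω, ((∑ i, X ω i * w i) ^ 2) ^ 2) :=
        (le_abs_self _).trans (abs_integral_mul_le_sqrt_mul_sqrt (hsq u) (hsq w))
    _ ≤ (κ ^ 2 * quadForm S u) * (κ ^ 2 * quadForm S w) :=
        mul_le_mul (hbound u hu) (hbound w hw) (sqrt_nonneg _)
          (mul_nonneg (sq_nonneg κ) (hq u ▸ integral_nonneg fun ω => sq_nonneg _))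
    _ = κ ^ 4 * quadForm S u * quadForm S w := by ring


lemma L4L2.abs_integral_sq_mul_mul_le [IsFiniteMeasure (ℙ : Measure Ω)]
    {S : Matrix (Fin d) (Fin d) ℝ} (h : L4L2 X κ) (hS : IsCov X S)
    (hX : ∀ i, MemLp (fun ω => X ω i) 4 ℙ) (i j l : Fin d) :
    |∫ ω, X ω i ^ 2 * X ω j * X ω l| ≤ κ ^ 4 * S i i * √(S j j) * √(S l l) := by
  have hpair : ∀ k, ∫ ω, (X ω i * X ω k) ^ 2 ≤ κ ^ 4 * S i i * S k k := fun k => by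
    simpa only [sum_mul_single, quadForm_single, mul_pow] using
      h.integral_sq_mul_sq_le hS hX (single_mem_unitSphere i) (single_mem_unitSphere k)
  have hSii := hS.diag_nonneg i
  calc |∫ ω, X ω i ^ 2 * X ω j * X ω l|
      = |∫ ω, (X ω i * X ω j) * (X ω i * X ω l)| := by
        congr 1; exact integral_congr_ae (ae_of_all _ fun ω => by ring)
    _ ≤ √(∫ ω, (X ω i * X ω j) ^ 2) * √(∫ ω, (X ω i * X ω l) ^ 2) :=
        abs_integral_mul_le_sqrt_mul_sqrt ((hX j).mul' (hX i)) ((hX l).mul' (hX i))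
    _ ≤ √(κ ^ 4 * S i i * S j j) * √(κ ^ 4 * S i i * S l l) := by
        gcongr <;> apply hpair
    _ = κ ^ 4 * S i i * √(S j j) * √(S l l) := by
        have hK : 0 ≤ κ ^ 4 * S i i := mul_nonneg (by positivity) hSii
        rw [← sqrt_mul (mul_nonneg hK (hS.diag_nonneg j)),
          show κ ^ 4 * S i i * S j j * (κ ^ 4 * S i i * S l l) =
            (κ ^ 4 * S i i) ^ 2 * (S j j * S l l) by ring,
          sqrt_mul (sq_nonneg _), sqrt_sq hK, sqrt_mul (hS.diag_nonneg j), mul_assoc,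
          mul_assoc, mul_assoc]

lemma L4L2.sum_integral_sq_mul_mul_le [IsFiniteMeasure (ℙ : Measure Ω)]
    {S : Matrix (Fin d) (Fin d) ℝ} (h : L4L2 X κ) (hS : IsCov X S)
    (hX : ∀ i, MemLp (fun ω => X ω i) 4 ℙ) {v : Fin d → ℝ} (hv : v ∈ unitSphere d) :
    ∑ i, ∑ j, ∑ l, (∫ ω, X ω i ^ 2 * X ω j * X ω l) * v j * v l ≤
      κ ^ 4 * opNorm S * S.trace := by
  have hrow : ∀ i, ∑ j, ∑ l, (∫ ω, X ω i ^ 2 * X ω j * X ω l) * v j * v l =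
      ∫ ω, (∑ k, X ω k * (Pi.single i 1 : Fin d → ℝ) k) ^ 2 * (∑ k, X ω k * v k) ^ 2 := by
    intro i
    have hexpand : ∀ ω, (∑ k, X ω k * (Pi.single i 1 : Fin d → ℝ) k) ^ 2 *
        (∑ k, X ω k * v k) ^ 2 = ∑ j, ∑ l, X ω i ^ 2 * X ω j * X ω l * (v j * v l) := by
      intro ω
      rw [sum_mul_single, sq (∑ k, _), sum_mul_sum, mul_sum]
      exact sum_congr rfl fun j _ => by rw [mul_sum]; exact sum_congr rfl fun l _ => by ring
    have hint := fun j l => (integrable_sq_mul_mul hX i j l).mul_const (v j * v l)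
    simp_rw [hexpand]
    rw [integral_finsetSum _ fun j _ => integrable_finsetSum _ fun l _ => hint j l]
    refine sum_congr rfl fun j _ => ?_
    rw [integral_finsetSum _ fun l _ => hint j l]
    exact sum_congr rfl fun l _ => by rw [integral_mul_const]; ring
  calc ∑ i, ∑ j, ∑ l, (∫ ω, X ω i ^ 2 * X ω j * X ω l) * v j * v l
      ≤ ∑ i, κ ^ 4 * S i i * opNorm S := by
        refine sum_le_sum fun i _ => ?_
        rw [hrow]
        refine (h.integral_sq_mul_sq_le hS hX (single_mem_unitSphere i) hv).trans ?_
        rw [quadForm_single]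
        exact mul_le_mul_of_nonneg_left (quadForm_le_opNorm S hv)
          (mul_nonneg (by positivity) (hS.diag_nonneg i))
    _ = κ ^ 4 * opNorm S * S.trace := by
        rw [Matrix.trace, mul_sum]
        exact sum_congr rfl fun i _ => by simp only [Matrix.diag]; ring

lemma L4L2.sum_pairwise_ne_integral_sq_mul_mul_le [IsFiniteMeasure (ℙ : Measure Ω)]
    {S : Matrix (Fin d) (Fin d) ℝ} (h : L4L2 X κ) (hS : IsCov X S)
    (hX : ∀ i, MemLp (fun ω => X ω i) 4 ℙ) {v : Fin d → ℝ} (hv : v ∈ unitSphere d) :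
    ∑ i, ∑ j, ∑ l, (if i ≠ j ∧ j ≠ l ∧ i ≠ l then
        (∫ ω, X ω i ^ 2 * X ω j * X ω l) * v j * v l else 0) ≤
      4 * (κ ^ 4 * opNorm S * S.trace) := by
  have hcoincident := sum_abs_partial_diag_le
    (a := fun i j l => (∫ ω, X ω i ^ 2 * X ω j * X ω l) * v j * v l) (s := fun i => S i i)
    (K := κ ^ 4) (N := opNorm S) (by positivity) (norm_nonneg _) hS.diag_nonneg
    (diag_le_opNorm S) hv fun i j l => by
      rw [abs_mul, abs_mul]
      calc _ ≤ κ ^ 4 * S i i * √(S j j) * √(S l l) * |v j| * |v l| := by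
            gcongr; exact h.abs_integral_sq_mul_mul_le hS hX i j l
        _ = _ := by ring
  have hfull := h.sum_integral_sq_mul_mul_le hS hX hv
  refine (sum_ite_pairwise_ne_le _).trans ?_
  rw [Matrix.trace] at hfull ⊢
  simp only [Matrix.diag] at hfull ⊢
  linarith

end Moments

section Sparsification

variable {Ω : Type*} [MeasureSpace Ω] {d : ℕ} {p : ℝ}

lemma IsBernoulliMask.integral_eq {ε : Ω → Fin d → ℝ} (hε : IsBernoulliMask p ε) (hp : 0 ≤ p)
    (i : Fin d) : ∫ ω, ε ω i = p := by
  obtain ⟨h01, hm, hP, -⟩ := hε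
  have hind : (fun ω => ε ω i) = {ω | ε ω i = 1}.indicator 1 := by
    funext ω
    rcases h01 ω i with h | h <;> simp [h]
  rw [hind, integral_indicator_one (s := {ω | ε ω i = 1}) (hm i (measurableSet_singleton 1)),
    measureReal_def, hP i, ENNReal.toReal_ofReal hp]

lemma IsBernoulliMask.integral_mul_mul_eq {ε : Ω → Fin d → ℝ} (hε : IsBernoulliMask p ε)
    (hp : 0 ≤ p) {i j l : Fin d} (hij : i ≠ j) (hjl : j ≠ l) (hil : i ≠ l) :
    ∫ ω, ε ω i * ε ω j * ε ω l = p ^ 3 := by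
  have hm := hε.2.1
  have hindep := hε.2.2.2
  have hl : l ∉ ({i, j} : Finset (Fin d)) := by simp [hil.symm, hjl.symm]
  have hij_l := hindep.indepFun_finsetProd_of_notMem hm hl
  rw [prod_pair hij] at hij_l
  calc ∫ ω, ε ω i * ε ω j * ε ω l
      = (∫ ω, ε ω i * ε ω j) * ∫ ω, ε ω l :=
        hij_l.integral_fun_mul_eq_mul_integral ((hm i).mul (hm j)).aestronglyMeasurable
          (hm l).aestronglyMeasurable
    _ = (∫ ω, ε ω i) * (∫ ω, ε ω j) * ∫ ω, ε ω l := by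
        rw [(hindep.indepFun hij).integral_fun_mul_eq_mul_integral (hm i).aestronglyMeasurable
          (hm j).aestronglyMeasurable]
    _ = p ^ 3 := by
        rw [hε.integral_eq hp, hε.integral_eq hp, hε.integral_eq hp]
        ring

variable {X ε Y : Ω → Fin d → ℝ}

lemma IsSparsified.memLp (hY : IsSparsified p X ε Y) {q : ℝ≥0∞}
    (hX : ∀ i, MemLp (fun ω => X ω i) q ℙ) (i : Fin d) : MemLp (fun ω => Y ω i) q ℙ := by
  obtain ⟨⟨h01, hεm, -, -⟩, hXm, -, hYdef⟩ := hY
  refine (hX i).mono ?_ (ae_of_all _ fun ω => ?_)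
  · simp_rw [hYdef]
    exact ((measurable_pi_apply i).comp hXm |>.mul (hεm i)).aestronglyMeasurable
  · rw [hYdef, norm_mul]
    rcases h01 ω i with h | h <;> simp [h]

lemma IsSparsified.integral_sq_mul_mul (hY : IsSparsified p X ε Y) (hp : 0 ≤ p)
    {i j l : Fin d} (hij : i ≠ j) (hjl : j ≠ l) (hil : i ≠ l) :
    ∫ ω, Y ω i ^ 2 * Y ω j * Y ω l = p ^ 3 * ∫ ω, X ω i ^ 2 * X ω j * X ω l := by
  obtain ⟨hε, hXm, hXε, hYdef⟩ := hY
  have hmask : ∀ ω, Y ω i ^ 2 * Y ω j * Y ω l =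
      (X ω i ^ 2 * X ω j * X ω l) * (ε ω i * ε ω j * ε ω l) := by
    intro ω
    simp only [hYdef]
    rcases hε.1 ω i with h | h <;> rw [h] <;> ring
  have hφ : Measurable fun x : Fin d → ℝ => x i ^ 2 * x j * x l := by fun_prop
  have hψ : Measurable fun x : Fin d → ℝ => x i * x j * x l := by fun_prop
  have hindep : IndepFun (fun ω => X ω i ^ 2 * X ω j * X ω l)
      (fun ω => ε ω i * ε ω j * ε ω l) := hXε.comp hφ hψ
  simp_rw [hmask]
  rw [hindep.integral_fun_mul_eq_mul_integral (hφ.comp hXm).aestronglyMeasurable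
    (hψ.comp (measurable_pi_iff.mpr hε.2.1)).aestronglyMeasurable,
    hε.integral_mul_mul_eq hp hij hjl hil, mul_comm]

lemma IsSparsified.integral_sum_pairwise_ne (hY : IsSparsified p X ε Y) (hp : 0 ≤ p)
    (hX : ∀ i, MemLp (fun ω => X ω i) 4 ℙ) (c : ℝ) (v : Fin d → ℝ) :
    ∫ ω, ∑ i, ∑ j, ∑ l, (if i ≠ j ∧ j ≠ l ∧ i ≠ l then
        Y ω i ^ 2 * Y ω j * Y ω l * c * v j * v l else 0) =
      p ^ 3 * c * ∑ i, ∑ j, ∑ l, (if i ≠ j ∧ j ≠ l ∧ i ≠ l then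
        (∫ ω, X ω i ^ 2 * X ω j * X ω l) * v j * v l else 0) := by
  have hint : ∀ i j l, Integrable fun ω => if i ≠ j ∧ j ≠ l ∧ i ≠ l then
      Y ω i ^ 2 * Y ω j * Y ω l * c * v j * v l else 0 := by
    intro i j l
    split_ifs
    · exact (((integrable_sq_mul_mul (hY.memLp hX) i j l).mul_const c).mul_const _).mul_const _
    · exact integrable_zero _ _ _
  rw [integral_finsetSum _ fun i _ => integrable_finsetSum _ fun j _ =>
    integrable_finsetSum _ fun l _ => hint i j l, mul_sum]
  refine sum_congr rfl fun i _ => ?_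
  rw [integral_finsetSum _ fun j _ => integrable_finsetSum _ fun l _ => hint i j l, mul_sum]
  refine sum_congr rfl fun j _ => ?_
  rw [integral_finsetSum _ fun l _ => hint i j l, mul_sum]
  refine sum_congr rfl fun l _ => ?_
  by_cases h : i ≠ j ∧ j ≠ l ∧ i ≠ l
  · simp only [if_pos h, integral_mul_const, hY.integral_sq_mul_mul hp h.1 h.2.1 h.2.2]
    ring
  · simp only [if_neg h, integral_zero, mul_zero]

end Sparsification

/-- There is an absolute constant `C > 0` such that if `X` is zero-mean with
covariance `Σ` satisfying `L₄-L₂` with constant `κ`, `Y = X ⊙ p`, `β > 0` and `v ∈ S^{d-1}`,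
then `E Σ_{i≠j≠l} ⟨Y,e_i⟩² ⟨Y,e_j⟩ ⟨Y,e_l⟩ β⁻¹ v_j v_l ≤
C p³ κ⁴ (‖Σ‖² + β⁻² tr(Σ)² + β⁻¹ ‖Σ‖ tr(Σ))`, the sum ranging over pairwise distinct
triples `(i,j,l)`. -/
theorem statement_14 :
    ∃ C : ℝ, 0 < C ∧
      ∀ (Ω : Type) [MeasureSpace Ω] [IsProbabilityMeasure (ℙ : Measure Ω)]
        (d : ℕ) (X ε Y : Ω → Fin d → ℝ) (S : Matrix (Fin d) (Fin d) ℝ)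
        (κ p β : ℝ) (v : Fin d → ℝ),
        ZeroMean X → IsCov X S → FiniteFourthMoments X → 1 ≤ κ → L4L2 X κ →
        p ∈ Set.Ioc (0 : ℝ) 1 → 0 < β → v ∈ unitSphere d →
        IsSparsified p X ε Y →
        (∫ ω, ∑ i, ∑ j, ∑ l,
            if i ≠ j ∧ j ≠ l ∧ i ≠ l then
              (Y ω i) ^ 2 * Y ω j * Y ω l * β⁻¹ * v j * v l
            else 0) ≤
          C * p ^ 3 * κ ^ 4 * ((opNorm S) ^ 2 + β⁻¹ ^ 2 * S.trace ^ 2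
            + β⁻¹ * opNorm S * S.trace) := by
  refine ⟨4, by norm_num, ?_⟩
  rintro Ω _ _ d X ε Y S κ p β v - hS hX4 - hL4 ⟨hp, -⟩ hβ hv hY
  have hX := hX4.memLp_four hY.2.1
  have hsum := hL4.sum_pairwise_ne_integral_sq_mul_mul_le hS hX hv
  have hN : 0 ≤ opNorm S := norm_nonneg _
  have htr : 0 ≤ S.trace := sum_nonneg fun i _ => hS.diag_nonneg i
  rw [hY.integral_sum_pairwise_ne hp.le hX]
  calc _ ≤ p ^ 3 * β⁻¹ * (4 * (κ ^ 4 * opNorm S * S.trace)) :=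
        mul_le_mul_of_nonneg_left hsum (by positivity)
    _ = 4 * p ^ 3 * κ ^ 4 * (β⁻¹ * opNorm S * S.trace) := by ring
    _ ≤ _ := by
        gcongr
        exact le_add_of_nonneg_left (by positivity)
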